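/- arXiv:2508.06048 — 12 statements merged into one kernel-verified Lean document; each statement's English description precedes it below -/
import Mathlib

section
/- Let a_bi, a_iw, a_bw be positive reals with a_bi * a_iw > a_bw, and let a = min(a_bi, a_iw). Then the equation (a_bi - x)(a_iw - x) = a_bw + x has a root c with 0 < c < a. -/
/-! The function `(a_bi - x) * (a_iw - x)` starts above the line `a_bw + x` at `x = 0`, because
`a_bi * a_iw > a_bw`, and ends below it at `x = min a_bi a_iw`, where it vanishes while the line is
positive. The two graphs therefore cross strictly inside the interval. -/

open Set

theorem exists_mem_Ioo_eq_of_gt_of_lt {α δ : Type*} [ConditionallyCompleteLinearOrder α]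
    [TopologicalSpace α] [OrderTopology α] [DenselyOrdered α] [LinearOrder δ]
    [TopologicalSpace δ] [OrderClosedTopology δ] {a b : α} (hab : a ≤ b) {f g : α → δ}
    (hf : ContinuousOn f (Icc a b)) (hg : ContinuousOn g (Icc a b))
    (ha : g a < f a) (hb : f b < g b) : ∃ c ∈ Ioo a b, f c = g c := by
  obtain ⟨c, ⟨hac, hcb⟩, hfg⟩ := isPreconnected_Icc.intermediate_value₂
    (right_mem_Icc.2 hab) (left_mem_Icc.2 hab) hf hg hb.le ha.le
  refine ⟨c, ⟨hac.lt_of_ne ?_, hcb.lt_of_ne ?_⟩, hfg⟩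
  · rintro rfl
    exact ha.ne' hfg
  · rintro rfl
    exact hb.ne hfg

theorem sub_min_mul_sub_min_eq_zero {R : Type*} [CommRing R] [LinearOrder R] (p q : R) :
    (p - min p q) * (q - min p q) = 0 := by
  rcases min_choice p q with h | h <;> simp [h]

theorem stmt_1 (a_bi a_iw a_bw : ℝ)
    (hbi : 0 < a_bi) (hiw : 0 < a_iw) (hbw : 0 < a_bw)
    (h : a_bi * a_iw > a_bw) :
    ∃ c : ℝ, 0 < c ∧ c < min a_bi a_iw ∧ (a_bi - c) * (a_iw - c) = a_bw + c := by
  have hmin : 0 < min a_bi a_iw := lt_min hbi hiw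
  obtain ⟨c, ⟨hc0, hcmin⟩, hc⟩ := exists_mem_Ioo_eq_of_gt_of_lt hmin.le
    (f := fun x => (a_bi - x) * (a_iw - x)) (g := fun x => a_bw + x)
    (by fun_prop) (by fun_prop) (by simpa using h)
    (by simp only [sub_min_mul_sub_min_eq_zero]; linarith)
  exact ⟨c, hc0, hcmin, hc⟩
end

section
/- Let a_bi, a_iw, a_bj, a_jw be positive reals with a_bi * a_iw < a_bj * a_jw, and set ε = (a_bj * a_jw - a_bi * a_iw)/(a_bi + a_iw + a_bj + a_jw). Then (a_bi + ε)(a_iw + ε) = (a_bj - ε)(a_jw - ε), and moreover ε < a_bj and ε < a_jw. -/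
/-!
The ε² terms cancel in `(a + ε)(b + ε) - (c - ε)(d - ε) = ε (a + b + c + d) - (c d - a b)`, so the
equation is linear in ε and the given ε is its unique solution. After clearing the positive
denominator, `ε < c` becomes `0 < a b + c (a + b + c)`, and symmetrically for `d`.
-/

section BalancingShift

variable {𝕜 : Type*} [Field 𝕜]

def balancingShift (a b c d : 𝕜) : 𝕜 := (c * d - a * b) / (a + b + c + d)

theorem add_mul_add_eq_sub_mul_sub_iff {R : Type*} [CommRing R] {a b c d e : R} :
    (a + e) * (b + e) = (c - e) * (d - e) ↔ e * (a + b + c + d) = c * d - a * b := by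
  constructor <;> intro h <;> linear_combination h

theorem balancingShift_spec {a b c d : 𝕜} (hS : a + b + c + d ≠ 0) :
    (a + balancingShift a b c d) * (b + balancingShift a b c d) =
      (c - balancingShift a b c d) * (d - balancingShift a b c d) :=
  add_mul_add_eq_sub_mul_sub_iff.mpr (div_mul_cancel₀ _ hS)

theorem balancingShift_swap_right (a b c d : 𝕜) :
    balancingShift a b c d = balancingShift a b d c := by
  unfold balancingShift
  ring

end BalancingShift

section Ordered

variable {𝕜 : Type*} [Field 𝕜] [LinearOrder 𝕜] [IsStrictOrderedRing 𝕜]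

theorem balancingShift_lt_left {a b c d : 𝕜} (ha : 0 ≤ a) (hb : 0 ≤ b) (hc : 0 < c)
    (hd : 0 ≤ d) : balancingShift a b c d < c := by
  have hS : 0 < a + b + c + d := by positivity
  have hpos : 0 < a * b + c * (a + b + c) := by positivity
  rw [balancingShift, div_lt_iff₀ hS]
  linear_combination hpos

theorem balancingShift_lt_right {a b c d : 𝕜} (ha : 0 ≤ a) (hb : 0 ≤ b) (hc : 0 ≤ c)
    (hd : 0 < d) : balancingShift a b c d < d :=
  balancingShift_swap_right a b c d ▸ balancingShift_lt_left ha hb hd hc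

end Ordered

theorem stmt_3_general (a_bi a_iw a_bj a_jw : ℝ)
    (hbi : 0 < a_bi) (hiw : 0 < a_iw) (hbj : 0 < a_bj) (hjw : 0 < a_jw) :
    let ε := (a_bj * a_jw - a_bi * a_iw) / (a_bi + a_iw + a_bj + a_jw)
    (a_bi + ε) * (a_iw + ε) = (a_bj - ε) * (a_jw - ε) ∧ ε < a_bj ∧ ε < a_jw :=
  ⟨balancingShift_spec (by positivity),
    balancingShift_lt_left hbi.le hiw.le hbj hjw.le,
    balancingShift_lt_right hbi.le hiw.le hbj.le hjw⟩

theorem stmt_3 (a_bi a_iw a_bj a_jw : ℝ)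
    (hbi : 0 < a_bi) (hiw : 0 < a_iw) (hbj : 0 < a_bj) (hjw : 0 < a_jw)
    (h : a_bi * a_iw < a_bj * a_jw) :
    let ε := (a_bj * a_jw - a_bi * a_iw) / (a_bi + a_iw + a_bj + a_jw)
    (a_bi + ε) * (a_iw + ε) = (a_bj - ε) * (a_jw - ε) ∧ ε < a_bj ∧ ε < a_jw :=
  stmt_3_general a_bi a_iw a_bj a_jw hbi hiw hbj hjw
end

section
/- Suppose positive reals ã_bi, ã_iw, ã_bw satisfy ã_bi * ã_iw = ã_bw, and let η_bi = |ã_bi - a_bi|, η_iw = |ã_iw - a_iw|, η_bw = |ã_bw - a_bw| where a_bi * a_iw < a_bw. Let ε be the smallest positive root of (a_bi + x)(a_iw + x) = a_bw - x. Then at least one of η_bi ≥ ε, η_iw ≥ ε, η_bw ≥ ε holds. -/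
theorem sub_lt_add_mul_add_of_abs_sub_lt {x y a b c ε : ℝ} (hx : 0 ≤ x) (hy : 0 ≤ y)
    (hxa : |x - a| < ε) (hyb : |y - b| < ε) (hxyc : |x * y - c| < ε) :
    c - ε < (a + ε) * (b + ε) := by
  rw [abs_lt] at hxa hyb hxyc
  calc c - ε < x * y := by linarith
    _ < (a + ε) * (b + ε) := mul_lt_mul'' (by linarith) (by linarith) hx hy

theorem stmt_4_general (a_bi a_iw a_bw : ℝ)
    (ta_bi ta_iw ta_bw : ℝ)
    (htbi : 0 < ta_bi) (htiw : 0 < ta_iw)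
    (hcons : ta_bi * ta_iw = ta_bw)
    (ε : ℝ)
    (hroot : (a_bi + ε) * (a_iw + ε) = a_bw - ε) :
    ε ≤ |ta_bi - a_bi| ∨ ε ≤ |ta_iw - a_iw| ∨ ε ≤ |ta_bw - a_bw| := by
  by_contra! hclose
  obtain ⟨hbi, hiw, hbw⟩ := hclose
  subst hcons
  exact (sub_lt_add_mul_add_of_abs_sub_lt htbi.le htiw.le hbi hiw hbw).ne' hroot

theorem stmt_4 (a_bi a_iw a_bw : ℝ)
    (hbi : 0 < a_bi) (hiw : 0 < a_iw) (hbw : 0 < a_bw)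
    (h : a_bi * a_iw < a_bw)
    (ta_bi ta_iw ta_bw : ℝ)
    (htbi : 0 < ta_bi) (htiw : 0 < ta_iw) (htbw : 0 < ta_bw)
    (hcons : ta_bi * ta_iw = ta_bw)
    (ε : ℝ) (hε : 0 < ε)
    (hroot : (a_bi + ε) * (a_iw + ε) = a_bw - ε)
    (hsmall : ∀ x : ℝ, 0 < x → (a_bi + x) * (a_iw + x) = a_bw - x → ε ≤ x) :
    ε ≤ |ta_bi - a_bi| ∨ ε ≤ |ta_iw - a_iw| ∨ ε ≤ |ta_bw - a_bw| :=
  stmt_4_general a_bi a_iw a_bw ta_bi ta_iw ta_bw htbi htiw hcons ε hroot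
end

section
/- Let a_bi ≤ a_bj and a_iw ≤ a_jw be positive reals, with a_bi * a_iw < a_bw and a_bj * a_jw < a_bw for a positive real a_bw. Let ε_i, ε_j be the smallest positive roots of (a_bi + x)(a_iw + x) = a_bw - x and (a_bj + x)(a_jw + x) = a_bw - x respectively. Then ε_j ≤ ε_i. -/
/-!
The gap `(p + x)(q + x) - (r - x)` is negative at `x = 0` when `p q < r`, and it grows with `p` and
`q`. So the `j`-gap is nonnegative at `εᵢ`, where the `i`-gap vanishes, and the intermediate value
theorem gives a root of the `j`-equation in `(0, εᵢ]`; minimality of `εⱼ` finishes.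
-/

def rootGap (p q r x : ℝ) : ℝ := (p + x) * (q + x) - (r - x)

theorem continuous_rootGap (p q r : ℝ) : Continuous (rootGap p q r) := by
  unfold rootGap; fun_prop

theorem rootGap_zero_neg {p q r : ℝ} (h : p * q < r) : rootGap p q r 0 < 0 := by
  simp only [rootGap, add_zero, sub_zero]; linarith

theorem rootGap_le_rootGap {p q p' q' r x : ℝ} (hp : p ≤ p') (hq : q ≤ q')
    (hqx : 0 ≤ q + x) (hpx : 0 ≤ p' + x) : rootGap p q r x ≤ rootGap p' q' r x := by
  unfold rootGap
  have : (p + x) * (q + x) ≤ (p' + x) * (q' + x) :=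
    mul_le_mul (by linarith) (by linarith) hqx hpx
  linarith

theorem stmt_8_general (a_bi a_iw a_bj a_jw a_bw : ℝ)
    (hbi : 0 < a_bi) (hiw : 0 < a_iw)
    (hij : a_bi ≤ a_bj) (hiw' : a_iw ≤ a_jw)
    (hj : a_bj * a_jw < a_bw)
    (εi εj : ℝ) (hεi : 0 < εi)
    (hrooti : (a_bi + εi) * (a_iw + εi) = a_bw - εi)
    (hsmallj : ∀ x : ℝ, 0 < x → (a_bj + x) * (a_jw + x) = a_bw - x → εj ≤ x) :
    εj ≤ εi := by
  have hgap_i : rootGap a_bi a_iw a_bw εi = 0 := sub_eq_zero.mpr hrooti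
  have hgap_j : 0 ≤ rootGap a_bj a_jw a_bw εi :=
    hgap_i ▸ rootGap_le_rootGap hij hiw' (by linarith) (by linarith)
  obtain ⟨x, ⟨hx, hxε⟩, hroot⟩ := intermediate_value_Ioc hεi.le
    (continuous_rootGap a_bj a_jw a_bw).continuousOn ⟨rootGap_zero_neg hj, hgap_j⟩
  exact (hsmallj x hx (sub_eq_zero.mp hroot)).trans hxε

theorem stmt_8 (a_bi a_iw a_bj a_jw a_bw : ℝ)
    (hbi : 0 < a_bi) (hiw : 0 < a_iw) (hbj : 0 < a_bj) (hjw : 0 < a_jw)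
    (hbw : 0 < a_bw)
    (hij : a_bi ≤ a_bj) (hiw' : a_iw ≤ a_jw)
    (hi : a_bi * a_iw < a_bw) (hj : a_bj * a_jw < a_bw)
    (εi εj : ℝ) (hεi : 0 < εi) (hεj : 0 < εj)
    (hrooti : (a_bi + εi) * (a_iw + εi) = a_bw - εi)
    (hrootj : (a_bj + εj) * (a_jw + εj) = a_bw - εj)
    (hsmalli : ∀ x : ℝ, 0 < x → (a_bi + x) * (a_iw + x) = a_bw - x → εi ≤ x)
    (hsmallj : ∀ x : ℝ, 0 < x → (a_bj + x) * (a_jw + x) = a_bw - x → εj ≤ x) :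
    εj ≤ εi :=
  stmt_8_general a_bi a_iw a_bj a_jw a_bw hbi hiw hij hiw' hj εi εj hεi hrooti hsmallj
end

section
/- Let a_bi ≤ a_bj and a_iw ≤ a_jw be positive reals, with a_bi * a_iw > a_bw and a_bj * a_jw > a_bw for a positive real a_bw. Let ε_i, ε_j be the smallest positive roots of (a_bi - x)(a_iw - x) = a_bw + x and (a_bj - x)(a_jw - x) = a_bw + x respectively. Then ε_i ≤ ε_j. -/
/-! Put `m = min a_bi a_iw` and `b = min εj m`. At `b` the `i`-quadratic lies below `a_bw + b`: if
`b = εj` because its factors are nonnegative and dominated by those of the `j`-quadratic, which meets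
`a_bw + εj` there, and if `b = m` because one factor vanishes. As the `i`-quadratic starts above
`a_bw` at `0`, the intermediate value theorem gives an `i`-root in `(0, b]`, so `εi ≤ b ≤ εj`. -/

open Set

lemma exists_root_mem_Ioc {p q r b : ℝ} (hb : 0 ≤ b) (hpq : r < p * q)
    (hgap : (p - b) * (q - b) ≤ r + b) :
    ∃ x ∈ Ioc 0 b, (p - x) * (q - x) = r + x := by
  have hcont : ContinuousOn (fun x : ℝ => r + x - (p - x) * (q - x)) (Icc 0 b) := by fun_prop
  have hzero : (0 : ℝ) ∈ Ioc (r + 0 - (p - 0) * (q - 0)) (r + b - (p - b) * (q - b)) :=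
    ⟨by linarith, by linarith⟩
  obtain ⟨x, hx, hfx⟩ := intermediate_value_Ioc hb hcont hzero
  exact ⟨x, hx, by linarith⟩

lemma sub_mul_sub_le_sub_mul_sub {p q p' q' x : ℝ} (hp : x ≤ p) (hq : x ≤ q)
    (hpp' : p ≤ p') (hqq' : q ≤ q') :
    (p - x) * (q - x) ≤ (p' - x) * (q' - x) := by
  gcongr
  linarith

lemma sub_min_mul_sub_min (p q : ℝ) : (p - min p q) * (q - min p q) = 0 := by
  rcases min_cases p q with ⟨h, _⟩ | ⟨h, _⟩ <;> simp [h]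

theorem stmt_9_general (a_bi a_iw a_bj a_jw a_bw : ℝ)
    (hbi : 0 < a_bi) (hiw : 0 < a_iw)
    (hbw : 0 < a_bw)
    (hij : a_bi ≤ a_bj) (hiw' : a_iw ≤ a_jw)
    (hi : a_bi * a_iw > a_bw)
    (εi εj : ℝ) (hεj : 0 < εj)
    (hrootj : (a_bj - εj) * (a_jw - εj) = a_bw + εj)
    (hsmalli : ∀ x : ℝ, 0 < x → (a_bi - x) * (a_iw - x) = a_bw + x → εi ≤ x) :
    εi ≤ εj := by
  set m := min a_bi a_iw
  have hm : 0 < m := lt_min hbi hiw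
  have hgap : (a_bi - min εj m) * (a_iw - min εj m) ≤ a_bw + min εj m := by
    rcases le_total εj m with h | h
    · rw [min_eq_left h, ← hrootj]
      exact sub_mul_sub_le_sub_mul_sub (h.trans (min_le_left _ _)) (h.trans (min_le_right _ _))
        hij hiw'
    · rw [min_eq_right h, sub_min_mul_sub_min]
      linarith
  obtain ⟨x, ⟨hx, hxb⟩, hroot⟩ := exists_root_mem_Ioc (le_min hεj.le hm.le) hi hgap
  exact (hsmalli x hx hroot).trans (hxb.trans (min_le_left _ _))

theorem stmt_9 (a_bi a_iw a_bj a_jw a_bw : ℝ)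
    (hbi : 0 < a_bi) (hiw : 0 < a_iw) (hbj : 0 < a_bj) (hjw : 0 < a_jw)
    (hbw : 0 < a_bw)
    (hij : a_bi ≤ a_bj) (hiw' : a_iw ≤ a_jw)
    (hi : a_bi * a_iw > a_bw) (hj : a_bj * a_jw > a_bw)
    (εi εj : ℝ) (hεi : 0 < εi) (hεj : 0 < εj)
    (hrooti : (a_bi - εi) * (a_iw - εi) = a_bw + εi)
    (hrootj : (a_bj - εj) * (a_jw - εj) = a_bw + εj)
    (hsmalli : ∀ x : ℝ, 0 < x → (a_bi - x) * (a_iw - x) = a_bw + x → εi ≤ x)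
    (hsmallj : ∀ x : ℝ, 0 < x → (a_bj - x) * (a_jw - x) = a_bw + x → εj ≤ x) :
    εi ≤ εj :=
  stmt_9_general a_bi a_iw a_bj a_jw a_bw hbi hiw hbw hij hiw' hi εi εj hεj hrootj hsmalli
end

section
/- Let a_bi ≤ a_bj ≤ a_bk and a_iw ≤ a_jw ≤ a_kw be positive reals. Define ε_{p,q} = |a_bp * a_pw - a_bq * a_qw| / (a_bp + a_pw + a_bq + a_qw) for indices p, q ∈ {i, j, k}. Then ε_{i,j} ≤ ε_{i,k} and ε_{j,k} ≤ ε_{i,k}. -/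
/-! The map `x ↦ (x * y - c) / (x + y + s)` is increasing for `y, c, s ≥ 0`: cross-multiplying,
the difference of its values at `x' ≥ x` has numerator `(x' - x) * (y * (y + s) + c)`. Hence
`|b w - x y| / (b + w + x + y)` grows when `(x, y)` moves componentwise away from `(b, w)` in the
direction in which `x * y` moves away from `b * w`, and both inequalities follow by comparing
`(i, j)` with `(i, k)` and `(k, j)` with `(k, i)`. -/

noncomputable def normalizedProductDiff (b w x y : ℝ) : ℝ :=
  |b * w - x * y| / (b + w + x + y)

lemma normalizedProductDiff_comm (b w x y : ℝ) :
    normalizedProductDiff b w x y = normalizedProductDiff x y b w := by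
  unfold normalizedProductDiff
  rw [abs_sub_comm]
  ring_nf

lemma mul_sub_div_add_le_of_le {x x' y s c : ℝ} (hpos : 0 < x + y + s)
    (hc : 0 ≤ y * (y + s) + c) (hx : x ≤ x') :
    (x * y - c) / (x + y + s) ≤ (x' * y - c) / (x' + y + s) := by
  rw [div_le_div_iff₀ hpos (by linarith)]
  nlinarith [mul_nonneg (sub_nonneg.2 hx) hc]

lemma mul_sub_div_add_le_of_le_of_le {x x' y y' s c : ℝ} (hx₀ : 0 < x) (hy₀ : 0 < y)
    (hs : 0 ≤ s) (hc : 0 ≤ c) (hx : x ≤ x') (hy : y ≤ y') :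
    (x * y - c) / (x + y + s) ≤ (x' * y' - c) / (x' + y' + s) :=
  calc (x * y - c) / (x + y + s)
      ≤ (x' * y - c) / (x' + y + s) :=
        mul_sub_div_add_le_of_le (by linarith) (by positivity) hx
    _ = (y * x' - c) / (y + x' + s) := by ring_nf
    _ ≤ (y' * x' - c) / (y' + x' + s) :=
        mul_sub_div_add_le_of_le (by linarith) (by nlinarith) hy
    _ = (x' * y' - c) / (x' + y' + s) := by ring_nf

lemma normalizedProductDiff_eq_of_le {b w x y : ℝ} (h : b * w ≤ x * y) :
    normalizedProductDiff b w x y = (x * y - b * w) / (x + y + (b + w)) := by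
  rw [normalizedProductDiff, abs_sub_comm, abs_of_nonneg (sub_nonneg.2 h)]
  ring_nf

lemma normalizedProductDiff_eq_of_ge {b w x y : ℝ} (h : x * y ≤ b * w) :
    normalizedProductDiff b w x y = -((x * y - b * w) / (x + y + (b + w))) := by
  rw [normalizedProductDiff, abs_of_nonneg (sub_nonneg.2 h), ← neg_div]
  ring_nf

lemma normalizedProductDiff_le_of_le_of_le {b w x y x' y' : ℝ} (hb : 0 < b) (hw : 0 < w)
    (hx₀ : 0 < x) (hy₀ : 0 < y) (hbw : b * w ≤ x * y) (hx : x ≤ x') (hy : y ≤ y') :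
    normalizedProductDiff b w x y ≤ normalizedProductDiff b w x' y' := by
  have hbw' : b * w ≤ x' * y' := hbw.trans (mul_le_mul hx hy hy₀.le (hx₀.trans_le hx).le)
  rw [normalizedProductDiff_eq_of_le hbw, normalizedProductDiff_eq_of_le hbw']
  exact mul_sub_div_add_le_of_le_of_le hx₀ hy₀ (by positivity) (by positivity) hx hy

lemma normalizedProductDiff_le_of_ge_of_ge {b w x y x' y' : ℝ} (hb : 0 < b) (hw : 0 < w)
    (hx₀ : 0 < x') (hy₀ : 0 < y') (hbw : x * y ≤ b * w) (hx : x' ≤ x) (hy : y' ≤ y) :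
    normalizedProductDiff b w x y ≤ normalizedProductDiff b w x' y' := by
  have hbw' : x' * y' ≤ b * w := (mul_le_mul hx hy hy₀.le (hx₀.trans_le hx).le).trans hbw
  rw [normalizedProductDiff_eq_of_ge hbw, normalizedProductDiff_eq_of_ge hbw', neg_le_neg_iff]
  exact mul_sub_div_add_le_of_le_of_le hx₀ hy₀ (by positivity) (by positivity) hx hy

theorem stmt_10 (a_bi a_iw a_bj a_jw a_bk a_kw : ℝ)
    (hbi : 0 < a_bi) (hiw : 0 < a_iw) (hbj : 0 < a_bj) (hjw : 0 < a_jw)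
    (hbk : 0 < a_bk) (hkw : 0 < a_kw)
    (h1 : a_bi ≤ a_bj) (h2 : a_bj ≤ a_bk)
    (h3 : a_iw ≤ a_jw) (h4 : a_jw ≤ a_kw) :
    let εij := |a_bi * a_iw - a_bj * a_jw| / (a_bi + a_iw + a_bj + a_jw)
    let εik := |a_bi * a_iw - a_bk * a_kw| / (a_bi + a_iw + a_bk + a_kw)
    let εjk := |a_bj * a_jw - a_bk * a_kw| / (a_bj + a_jw + a_bk + a_kw)
    εij ≤ εik ∧ εjk ≤ εik := by
  have hij : a_bi * a_iw ≤ a_bj * a_jw := mul_le_mul h1 h3 hiw.le hbj.le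
  have hjk : a_bj * a_jw ≤ a_bk * a_kw := mul_le_mul h2 h4 hjw.le hbk.le
  refine ⟨normalizedProductDiff_le_of_le_of_le hbi hiw hbj hjw hij h2 h4, ?_⟩
  show normalizedProductDiff a_bj a_jw a_bk a_kw ≤ normalizedProductDiff a_bi a_iw a_bk a_kw
  rw [normalizedProductDiff_comm, normalizedProductDiff_comm a_bi]
  exact normalizedProductDiff_le_of_ge_of_ge hbk hkw hbi hiw hjk h1 h3
end

section
/- For any positive reals p, q with p ≤ r and q ≤ r, where r ≥ 1 and p*q > r, the smallest positive root ε of (p - x)(q - x) = r + x satisfies ε ≤ (2r + 1 - sqrt(8r + 1))/2. -/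
/-!
Put `f x = (p - x)(q - x) - (r + x)`, so `f 0 = pq - r > 0`. Let `e` be the smaller root of
`(r - x)² = r + x`, i.e. `e = (2r + 1 - √(8r + 1))/2`, which is positive since `r < pq ≤ r²`
forces `r > 1`.
At `c = min(p, q, e)` we have `f c ≤ 0`: if `c = e` then `(p - e)(q - e) ≤ (r - e)² = r + e`,
and otherwise one factor of `(p - c)(q - c)` vanishes. By the intermediate value theorem `f` has
a root in `(0, c]`, so the smallest positive root is at most `c ≤ e`.
-/

open Set

noncomputable def smallerRootSqSubEqAdd (r : ℝ) : ℝ := (2 * r + 1 - √(8 * r + 1)) / 2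

lemma sq_sub_smallerRootSqSubEqAdd {r : ℝ} (hr : 0 ≤ 8 * r + 1) :
    (r - smallerRootSqSubEqAdd r) ^ 2 = r + smallerRootSqSubEqAdd r := by
  have hs : √(8 * r + 1) ^ 2 = 8 * r + 1 := Real.sq_sqrt hr
  unfold smallerRootSqSubEqAdd
  linear_combination hs / 4

lemma smallerRootSqSubEqAdd_pos {r : ℝ} (hr : 1 < r) : 0 < smallerRootSqSubEqAdd r := by
  have hlt : √(8 * r + 1) < 2 * r + 1 := by
    rw [Real.sqrt_lt' (by linarith)]
    nlinarith
  unfold smallerRootSqSubEqAdd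
  linarith

lemma sub_mul_sub_le_add_of_sq_sub_eq {p q r e : ℝ} (hpr : p ≤ r) (hqr : q ≤ r)
    (hep : e ≤ p) (heq : e ≤ q) (he : (r - e) ^ 2 = r + e) :
    (p - e) * (q - e) ≤ r + e := by
  rw [← he, sq]
  exact mul_le_mul (by linarith) (by linarith) (by linarith) (by linarith)

lemma sub_mul_sub_min_le_add {p q r e : ℝ} (hp : 0 < p) (hq : 0 < q) (hpr : p ≤ r) (hqr : q ≤ r)
    (he : (r - e) ^ 2 = r + e) :
    (p - min (min p q) e) * (q - min (min p q) e) ≤ r + min (min p q) e := by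
  rcases le_total e (min p q) with hle | hle
  · rw [min_eq_right hle]
    exact sub_mul_sub_le_add_of_sq_sub_eq hpr hqr (hle.trans (min_le_left p q))
      (hle.trans (min_le_right p q)) he
  · rw [min_eq_left hle]
    rcases min_choice p q with hm | hm <;> rw [hm]
    · rw [sub_self, zero_mul]; linarith
    · rw [sub_self, mul_zero]; linarith

theorem stmt_12_general (p q r : ℝ)
    (hp : 0 < p) (hq : 0 < q)
    (hpr : p ≤ r) (hqr : q ≤ r)
    (h : p * q > r)
    (ε : ℝ)
    (hsmall : ∀ x : ℝ, 0 < x → (p - x) * (q - x) = r + x → ε ≤ x) :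
    ε ≤ (2 * r + 1 - Real.sqrt (8 * r + 1)) / 2 := by
  have hr : 1 < r := by nlinarith [mul_le_mul hpr hqr hq.le (hp.trans_le hpr).le]
  set e := smallerRootSqSubEqAdd r
  have he : (r - e) ^ 2 = r + e := sq_sub_smallerRootSqSubEqAdd (by linarith)
  set c := min (min p q) e
  have hc : 0 < c := lt_min (lt_min hp hq) (smallerRootSqSubEqAdd_pos hr)
  set f : ℝ → ℝ := fun x => (p - x) * (q - x) - (r + x)
  have hfc : f c ≤ 0 := by linarith [sub_mul_sub_min_le_add hp hq hpr hqr he]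
  have hf0 : 0 < f 0 := by simpa [f] using h
  obtain ⟨x, ⟨hx0, hxc⟩, hfx⟩ :=
    intermediate_value_Ioc' hc.le (by fun_prop) (show (0 : ℝ) ∈ Ico (f c) (f 0) from ⟨hfc, hf0⟩)
  calc ε ≤ x := hsmall x hx0 (sub_eq_zero.mp hfx)
    _ ≤ c := hxc
    _ ≤ e := min_le_right _ _

theorem stmt_12 (p q r : ℝ)
    (hp : 0 < p) (hq : 0 < q) (hr : 1 ≤ r)
    (hpr : p ≤ r) (hqr : q ≤ r)
    (h : p * q > r)
    (ε : ℝ) (hε : 0 < ε)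
    (hroot : (p - ε) * (q - ε) = r + ε)
    (hsmall : ∀ x : ℝ, 0 < x → (p - x) * (q - x) = r + x → ε ≤ x) :
    ε ≤ (2 * r + 1 - Real.sqrt (8 * r + 1)) / 2 :=
  stmt_12_general p q r hp hq hpr hqr h ε hsmall
end

section
/- For positive reals a_bi, a_iw, a_bj, a_jw all lying in the interval [1, r] for some r ≥ 1, the quantity |a_bi * a_iw - a_bj * a_jw| / (a_bi + a_iw + a_bj + a_jw) is at most (r^2 - 1)/(2r + 2). -/
/-!
Since (r² - 1)/(2r + 2) = (r - 1)/2, the claim is 2(ab - cd) ≤ (r - 1)(a + b + c + d) for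
a, b, c, d ∈ [1, r]. This separates into 2ab - (r - 1)(a + b) ≤ 2r ≤ 2cd + (r - 1)(c + d):
both sides are bilinear, the left one is largest at (a, b) = (r, r) and the right one smallest at
(c, d) = (1, 1), where each equals 2r.
-/

section BilinearBounds

variable {a b r : ℝ}

theorem two_mul_mul_sub_le_of_mem_Icc (ha : a ∈ Set.Icc 1 r) (hb : b ∈ Set.Icc 1 r) :
    2 * (a * b) - (r - 1) * (a + b) ≤ 2 * r := by
  obtain ⟨ha1, har⟩ := ha
  obtain ⟨hb1, hbr⟩ := hb
  -- the gap is (r - a)(b - 1) + (r - b)(a - 1) + 2(r - a) + 2(r - b)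
  nlinarith [mul_nonneg (sub_nonneg.2 har) (sub_nonneg.2 hb1),
    mul_nonneg (sub_nonneg.2 hbr) (sub_nonneg.2 ha1)]

theorem two_mul_le_two_mul_mul_add_of_mem_Icc (ha : a ∈ Set.Icc 1 r) (hb : b ∈ Set.Icc 1 r) :
    2 * r ≤ 2 * (a * b) + (r - 1) * (a + b) := by
  obtain ⟨ha1, har⟩ := ha
  obtain ⟨hb1, hbr⟩ := hb
  nlinarith [one_le_mul_of_one_le_of_one_le ha1 hb1]

end BilinearBounds

theorem two_mul_abs_mul_sub_mul_le {a b c d r : ℝ} (ha : a ∈ Set.Icc 1 r)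
    (hb : b ∈ Set.Icc 1 r) (hc : c ∈ Set.Icc 1 r) (hd : d ∈ Set.Icc 1 r) :
    2 * |a * b - c * d| ≤ (r - 1) * (a + b + c + d) := by
  rw [← abs_two, ← abs_mul, abs_le]
  constructor
  · linarith [two_mul_mul_sub_le_of_mem_Icc hc hd, two_mul_le_two_mul_mul_add_of_mem_Icc ha hb]
  · linarith [two_mul_mul_sub_le_of_mem_Icc ha hb, two_mul_le_two_mul_mul_add_of_mem_Icc hc hd]

theorem stmt_13_general (a_bi a_iw a_bj a_jw r : ℝ)
    (h1 : a_bi ∈ Set.Icc 1 r) (h2 : a_iw ∈ Set.Icc 1 r)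
    (h3 : a_bj ∈ Set.Icc 1 r) (h4 : a_jw ∈ Set.Icc 1 r) :
    |a_bi * a_iw - a_bj * a_jw| / (a_bi + a_iw + a_bj + a_jw) ≤
      (r ^ 2 - 1) / (2 * r + 2) := by
  have hr : 1 ≤ r := h1.1.trans h1.2
  have hsum : 0 < a_bi + a_iw + a_bj + a_jw := by
    linarith [h1.1, h2.1, h3.1, h4.1]
  have hbound : (r ^ 2 - 1) / (2 * r + 2) = (r - 1) / 2 := by
    rw [div_eq_div_iff (by linarith) two_ne_zero]
    ring
  rw [hbound, div_le_div_iff₀ hsum two_pos]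
  linarith [two_mul_abs_mul_sub_mul_le h1 h2 h3 h4]

theorem stmt_13 (a_bi a_iw a_bj a_jw r : ℝ)
    (hr : 1 ≤ r)
    (h1 : a_bi ∈ Set.Icc 1 r) (h2 : a_iw ∈ Set.Icc 1 r)
    (h3 : a_bj ∈ Set.Icc 1 r) (h4 : a_jw ∈ Set.Icc 1 r) :
    |a_bi * a_iw - a_bj * a_jw| / (a_bi + a_iw + a_bj + a_jw) ≤
      (r ^ 2 - 1) / (2 * r + 2) :=
  stmt_13_general a_bi a_iw a_bj a_jw r h1 h2 h3 h4
end

section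
/- Let n ≥ 2 and let (A_b, A_w) be a pairwise comparison system with positive entries, with best index b and worst index w. The system w_b/w_i = a_bi, w_i/w_w = a_iw for all i ≠ b,w, w_b/w_w = a_bw, together with w_1 + ... + w_n = 1 and all w_i > 0, has a solution if and only if a_bi * a_iw = a_bw for all i ∉ {b, w}. -/
/-! Under consistency the column `A_w` itself, normalised to sum `1`, is a solution: its ratios
to `w` reproduce `A_w`, and by consistency its ratios from `b` are `a_bw / a_iw = a_bi`. -/

theorem exists_pos_sum_eq_one_div_eq {ι : Type*} [Fintype ι] [Nonempty ι] {v : ι → ℝ}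
    (hv : ∀ i, 0 < v i) :
    ∃ wt : ι → ℝ, (∀ i, 0 < wt i) ∧ ∑ i, wt i = 1 ∧ ∀ i j, wt i / wt j = v i / v j := by
  have hS : 0 < ∑ j, v j := Finset.sum_pos (fun i _ => hv i) Finset.univ_nonempty
  refine ⟨fun i => v i / ∑ j, v j, fun i => div_pos (hv i) hS, ?_,
    fun i j => div_div_div_cancel_right₀ hS.ne' _ _⟩
  rw [← Finset.sum_div, div_self hS.ne']

theorem stmt_16_general (n : ℕ)
    (b w : Fin n)
    (ab aw : Fin n → ℝ)
    (haw : ∀ i, 0 < aw i)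
    (haww : aw w = 1)
    (habw : ab w = aw b) :
    (∃ wt : Fin n → ℝ,
      (∀ i, 0 < wt i) ∧
      (∑ i, wt i) = 1 ∧
      (∀ i, i ≠ b → i ≠ w → wt b / wt i = ab i ∧ wt i / wt w = aw i) ∧
      wt b / wt w = ab w) ↔
    (∀ i, i ≠ b → i ≠ w → ab i * aw i = ab w) := by
  constructor
  · rintro ⟨wt, hpos, -, hsys, hbw⟩ i hib hiw
    obtain ⟨hbi, hiw⟩ := hsys i hib hiw
    rw [← hbi, ← hiw, ← hbw, div_mul_div_cancel₀ (hpos i).ne']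
  · intro hcons
    have : Nonempty (Fin n) := ⟨b⟩
    obtain ⟨wt, hpos, hsum, hratio⟩ := exists_pos_sum_eq_one_div_eq haw
    refine ⟨wt, hpos, hsum, fun i hib hiw => ⟨?_, ?_⟩, ?_⟩
    · rw [hratio, ← habw, ← hcons i hib hiw, mul_div_cancel_right₀ _ (haw i).ne']
    · rw [hratio, haww, div_one]
    · rw [hratio, haww, div_one, habw]

theorem stmt_16 (n : ℕ) (hn : 2 ≤ n)
    (b w : Fin n) (hbw : b ≠ w)
    (ab aw : Fin n → ℝ)
    (hab : ∀ i, 0 < ab i) (haw : ∀ i, 0 < aw i)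
    (habb : ab b = 1) (haww : aw w = 1)
    (habw : ab w = aw b) :
    (∃ wt : Fin n → ℝ,
      (∀ i, 0 < wt i) ∧
      (∑ i, wt i) = 1 ∧
      (∀ i, i ≠ b → i ≠ w → wt b / wt i = ab i ∧ wt i / wt w = aw i) ∧
      wt b / wt w = ab w) ↔
    (∀ i, i ≠ b → i ≠ w → ab i * aw i = ab w) :=
  stmt_16_general n b w ab aw haw haww habw
end

section
/- Under the hypotheses of the previous statement, if a solution exists it is unique and given by w_i = a_iw / (Σ_{j=1}^n a_jw) = 1 / (a_bi * Σ_{j=1}^n (1/a_bj)) for all i. -/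
/-!
Each equation of the system fixes the ratio of two weights, so every weight is a known multiple
of `w_w` (through the `a_iw`) and of `w_b` (through the `1 / a_bi`); the normalisation
`Σ w_i = 1` then pins down that common factor.
-/

open Finset

theorem eq_div_sum_of_eq_mul_of_sum_eq_one {ι K : Type*} [Fintype ι] [Field K]
    {x c : ι → K} {t : K} (hx : ∀ i, x i = c i * t) (hsum : ∑ i, x i = 1) (i : ι) :
    x i = c i / ∑ j, c j := by
  have hnorm : (∑ j, c j) * t = 1 := by
    rw [← hsum, sum_mul]
    exact sum_congr rfl fun j _ => (hx j).symm
  rw [hx i, eq_inv_of_mul_eq_one_right hnorm, div_eq_mul_inv]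

theorem stmt_17_general (n : ℕ)
    (b w : Fin n)
    (ab aw : Fin n → ℝ)
    (habb : ab b = 1) (haww : aw w = 1)
    (habw : ab w = aw b)
    (wt : Fin n → ℝ)
    (hwt : ∀ i, 0 < wt i)
    (hsum : (∑ i, wt i) = 1)
    (hsys : ∀ i, i ≠ b → i ≠ w → wt b / wt i = ab i ∧ wt i / wt w = aw i)
    (hbw' : wt b / wt w = ab w) :
    ∀ i, wt i = aw i / (∑ j, aw j) ∧ wt i = 1 / (ab i * ∑ j, (ab j)⁻¹) := by
  have hb := (hwt b).ne'
  have hw := (hwt w).ne'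
  have hmul_w : ∀ i, wt i = aw i * wt w := by
    intro i
    by_cases hib : i = b
    · subst hib
      rw [← habw, ← hbw', div_mul_cancel₀ _ hw]
    by_cases hiw : i = w
    · rw [hiw, haww, one_mul]
    · rw [← (hsys i hib hiw).2, div_mul_cancel₀ _ hw]
  have hmul_b : ∀ i, wt i = (ab i)⁻¹ * wt b := by
    intro i
    by_cases hib : i = b
    · rw [hib, habb, inv_one, one_mul]
    have hi := (hwt i).ne'
    by_cases hiw : i = w
    · subst hiw
      rw [← hbw']
      field_simp
    · rw [← (hsys i hib hiw).1]
      field_simp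
  intro i
  refine ⟨eq_div_sum_of_eq_mul_of_sum_eq_one hmul_w hsum i, ?_⟩
  rw [one_div, mul_inv, ← div_eq_mul_inv]
  exact eq_div_sum_of_eq_mul_of_sum_eq_one hmul_b hsum i

theorem stmt_17 (n : ℕ) (hn : 2 ≤ n)
    (b w : Fin n) (hbw : b ≠ w)
    (ab aw : Fin n → ℝ)
    (hab : ∀ i, 0 < ab i) (haw : ∀ i, 0 < aw i)
    (habb : ab b = 1) (haww : aw w = 1)
    (habw : ab w = aw b)
    (hcons : ∀ i, i ≠ b → i ≠ w → ab i * aw i = ab w)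
    (wt : Fin n → ℝ)
    (hwt : ∀ i, 0 < wt i)
    (hsum : (∑ i, wt i) = 1)
    (hsys : ∀ i, i ≠ b → i ≠ w → wt b / wt i = ab i ∧ wt i / wt w = aw i)
    (hbw' : wt b / wt w = ab w) :
    ∀ i, wt i = aw i / (∑ j, aw j) ∧ wt i = 1 / (ab i * ∑ j, (ab j)⁻¹) :=
  stmt_17_general n b w ab aw habb haww habw wt hwt hsum hsys hbw'
end

section
/- Let a_bi₀, a_i₀w, a_bj₀, a_j₀w be positive reals with a_bi₀ * a_i₀w < a_bj₀ * a_j₀w, and let ε = (a_bj₀ a_j₀w - a_bi₀ a_i₀w)/(a_bi₀ + a_i₀w + a_bj₀ + a_j₀w). Suppose (ã_bi₀, ã_i₀w, ã_bj₀, ã_j₀w) are positive reals satisfying ã_bi₀ * ã_i₀w = ã_bj₀ * ã_j₀w, with |ã_bi₀ - a_bi₀| ≤ ε, |ã_i₀w - a_i₀w| ≤ ε, |ã_bj₀ - a_bj₀| ≤ ε, |ã_j₀w - a_j₀w| ≤ ε. Then ã_bi₀ = a_bi₀ + ε, ã_i₀w = a_i₀w + ε, ã_bj₀ = a_bj₀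 - ε, ã_j₀w = a_j₀w - ε. -/
/-! The deviation bounds give `ta_bi * ta_iw ≤ (a_bi + ε) * (a_iw + ε)` and
`(a_bj - ε) * (a_jw - ε) ≤ ta_bj * ta_jw`, and `ε` is exactly the shift for which these two
bounds coincide. Since the constraint equates the two products, both inequalities are equalities,
and a product of positive factors attains its coordinatewise upper bound only at that bound. -/

section

variable {α : Type*}

theorem eq_and_eq_of_le_of_le_of_mul_le [Semiring α] [LinearOrder α] [IsStrictOrderedRing α]
    {x y a b : α} (hx : 0 < x) (hy : 0 < y) (hxa : x ≤ a) (hyb : y ≤ b) (h : a * b ≤ x * y) :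
    x = a ∧ y = b := by
  constructor
  · refine hxa.eq_of_not_lt fun hlt => h.not_gt ?_
    calc x * y < a * y := mul_lt_mul_of_pos_right hlt hy
      _ ≤ a * b := mul_le_mul_of_nonneg_left hyb (hx.le.trans hxa)
  · refine hyb.eq_of_not_lt fun hlt => h.not_gt ?_
    calc x * y < x * b := mul_lt_mul_of_pos_left hlt hx
      _ ≤ a * b := mul_le_mul_of_nonneg_right hxa (hy.le.trans hyb)

variable [Field α] [LinearOrder α] [IsStrictOrderedRing α]

theorem add_mul_add_eq_sub_mul_sub_of_eq_div {p q r s : α} (hS : p + q + r + s ≠ 0) :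
    let ε := (r * s - p * q) / (p + q + r + s)
    (p + ε) * (q + ε) = (r - ε) * (s - ε) := by
  intro ε
  have hε : ε * (p + q + r + s) = r * s - p * q := div_mul_cancel₀ _ hS
  linear_combination hε

theorem div_lt_min_of_pos {p q r s : α} (hp : 0 < p) (hq : 0 < q) (hr : 0 < r) (hs : 0 < s) :
    (r * s - p * q) / (p + q + r + s) < min r s := by
  have hS : 0 < p + q + r + s := by positivity
  rw [lt_min_iff, div_lt_iff₀ hS, div_lt_iff₀ hS]
  constructor
  · nlinarith [mul_pos hp hq, mul_pos hr (add_pos (add_pos hp hq) hr)]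
  · nlinarith [mul_pos hp hq, mul_pos hs (add_pos (add_pos hp hq) hs)]

end

theorem stmt_18_general (a_bi a_iw a_bj a_jw : ℝ)
    (hbi : 0 < a_bi) (hiw : 0 < a_iw) (hbj : 0 < a_bj) (hjw : 0 < a_jw)
    (ta_bi ta_iw ta_bj ta_jw : ℝ)
    (htbi : 0 < ta_bi) (htiw : 0 < ta_iw)
    (hcons : ta_bi * ta_iw = ta_bj * ta_jw) :
    let ε := (a_bj * a_jw - a_bi * a_iw) / (a_bi + a_iw + a_bj + a_jw)
    |ta_bi - a_bi| ≤ ε → |ta_iw - a_iw| ≤ ε → |ta_bj - a_bj| ≤ ε →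
      |ta_jw - a_jw| ≤ ε →
    ta_bi = a_bi + ε ∧ ta_iw = a_iw + ε ∧ ta_bj = a_bj - ε ∧ ta_jw = a_jw - ε := by
  intro ε h1 h2 h3 h4
  have hshift : (a_bi + ε) * (a_iw + ε) = (a_bj - ε) * (a_jw - ε) :=
    add_mul_add_eq_sub_mul_sub_of_eq_div (by positivity)
  obtain ⟨hbj_ε, hjw_ε⟩ : ε < a_bj ∧ ε < a_jw := lt_min_iff.1 (div_lt_min_of_pos hbi hiw hbj hjw)
  rw [abs_le] at h1 h2 h3 h4
  have hup : ta_bi * ta_iw ≤ (a_bi + ε) * (a_iw + ε) :=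
    mul_le_mul (by linarith) (by linarith) htiw.le (by linarith)
  have hlo : (a_bj - ε) * (a_jw - ε) ≤ ta_bj * ta_jw :=
    mul_le_mul (by linarith) (by linarith) (sub_nonneg.2 hjw_ε.le) (by linarith)
  obtain ⟨e1, e2⟩ := eq_and_eq_of_le_of_le_of_mul_le (a := a_bi + ε) (b := a_iw + ε)
    htbi htiw (by linarith) (by linarith) (hshift ▸ hcons ▸ hlo)
  obtain ⟨e3, e4⟩ := eq_and_eq_of_le_of_le_of_mul_le (a := ta_bj) (b := ta_jw)
    (sub_pos.2 hbj_ε) (sub_pos.2 hjw_ε) (by linarith) (by linarith) (hshift ▸ hcons ▸ hup)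
  exact ⟨e1, e2, e3.symm, e4.symm⟩

theorem stmt_18 (a_bi a_iw a_bj a_jw : ℝ)
    (hbi : 0 < a_bi) (hiw : 0 < a_iw) (hbj : 0 < a_bj) (hjw : 0 < a_jw)
    (h : a_bi * a_iw < a_bj * a_jw)
    (ta_bi ta_iw ta_bj ta_jw : ℝ)
    (htbi : 0 < ta_bi) (htiw : 0 < ta_iw) (htbj : 0 < ta_bj) (htjw : 0 < ta_jw)
    (hcons : ta_bi * ta_iw = ta_bj * ta_jw) :
    let ε := (a_bj * a_jw - a_bi * a_iw) / (a_bi + a_iw + a_bj + a_jw)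
    |ta_bi - a_bi| ≤ ε → |ta_iw - a_iw| ≤ ε → |ta_bj - a_bj| ≤ ε →
      |ta_jw - a_jw| ≤ ε →
    ta_bi = a_bi + ε ∧ ta_iw = a_iw + ε ∧ ta_bj = a_bj - ε ∧ ta_jw = a_jw - ε :=
  stmt_18_general a_bi a_iw a_bj a_jw hbi hiw hbj hjw ta_bi ta_iw ta_bj ta_jw htbi htiw hcons
end

section
/- Let a_bi, a_iw be positive reals and let T > 0 with a_bi * a_iw ≤ T. Set s = (-(a_bi + a_iw) + sqrt((a_bi + a_iw)^2 - 4 a_bi a_iw + 4T))/2. If positive reals b', w' satisfy b' * w' = T, then max(|b' - a_bi|, |w' - a_iw|) ≥ s, with equality if and only if b' = a_bi + s and w' = a_iw + s. -/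
/-!
The shift `s` is the nonnegative root of `(a_bi + s) * (a_iw + s) = T`. If both deviations of a
factorization `b' * w' = T` were below `s`, then `b' < a_bi + s` and `w' < a_iw + s`, so
`b' * w' < T`. If both are at most `s`, the same comparison forces `b' * w' ≤ T` with equality
only when both factors are the shifted ones.
-/

section Chebyshev

variable {α : Type*} [CommRing α] [LinearOrder α] [IsStrictOrderedRing α] {a b b' w' s : α}

theorem le_max_abs_sub_of_add_mul_add_eq (hb' : 0 < b') (hw' : 0 < w')
    (hprod : (a + s) * (b + s) = b' * w') : s ≤ max |b' - a| |w' - b| := by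
  by_contra! hlt
  obtain ⟨hb, hw⟩ := max_lt_iff.mp hlt
  have hb_lt : b' < a + s := sub_lt_iff_lt_add'.mp (abs_sub_lt_iff.mp hb).1
  have hw_lt : w' < b + s := sub_lt_iff_lt_add'.mp (abs_sub_lt_iff.mp hw).1
  exact (mul_lt_mul'' hb_lt hw_lt hb'.le hw'.le).ne hprod.symm

theorem max_abs_sub_eq_iff_of_add_mul_add_eq (hs : 0 ≤ s) (hb' : 0 < b') (hw' : 0 < w')
    (hprod : (a + s) * (b + s) = b' * w') :
    max |b' - a| |w' - b| = s ↔ b' = a + s ∧ w' = b + s := by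
  constructor
  · intro hmax
    obtain ⟨hb, hw⟩ := max_le_iff.mp hmax.le
    have hb_le : b' ≤ a + s := sub_le_iff_le_add'.mp (abs_sub_le_iff.mp hb).1
    have hw_le : w' ≤ b + s := sub_le_iff_le_add'.mp (abs_sub_le_iff.mp hw).1
    exact (mul_eq_mul_iff_eq_and_eq_of_pos hb_le hw_le hb' (hw'.trans_le hw_le)).mp hprod.symm
  · rintro ⟨rfl, rfl⟩
    simp [abs_of_nonneg hs]

end Chebyshev

section SymmetricShift

/-- The root of `(x + s) * (y + s) = T` given by the quadratic formula. -/
noncomputable def symmetricShift (x y T : ℝ) : ℝ :=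
  (-(x + y) + √((x + y) ^ 2 - 4 * x * y + 4 * T)) / 2

variable {x y T : ℝ}

theorem sq_add_le_discr (h : x * y ≤ T) : (x + y) ^ 2 ≤ (x + y) ^ 2 - 4 * x * y + 4 * T := by
  linarith

theorem symmetricShift_nonneg (h : x * y ≤ T) : 0 ≤ symmetricShift x y T := by
  have := Real.abs_le_sqrt (sq_add_le_discr h)
  unfold symmetricShift
  linarith [le_abs_self (x + y)]

theorem add_symmetricShift_mul_add (h : x * y ≤ T) :
    (x + symmetricShift x y T) * (y + symmetricShift x y T) = T := by
  have hsq := Real.sq_sqrt ((sq_nonneg (x + y)).trans (sq_add_le_discr h))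
  unfold symmetricShift
  linear_combination hsq / 4

end SymmetricShift

theorem stmt_19_general (a_bi a_iw T : ℝ)
    (h : a_bi * a_iw ≤ T)
    (b' w' : ℝ) (hb' : 0 < b') (hw' : 0 < w')
    (hprod : b' * w' = T) :
    let s := (-(a_bi + a_iw) +
      Real.sqrt ((a_bi + a_iw) ^ 2 - 4 * a_bi * a_iw + 4 * T)) / 2
    s ≤ max |b' - a_bi| |w' - a_iw| ∧
    (max |b' - a_bi| |w' - a_iw| = s ↔ b' = a_bi + s ∧ w' = a_iw + s) := by
  have hfac := (add_symmetricShift_mul_add h).trans hprod.symm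
  exact ⟨le_max_abs_sub_of_add_mul_add_eq hb' hw' hfac,
    max_abs_sub_eq_iff_of_add_mul_add_eq (symmetricShift_nonneg h) hb' hw' hfac⟩

theorem stmt_19 (a_bi a_iw T : ℝ)
    (hbi : 0 < a_bi) (hiw : 0 < a_iw) (hT : 0 < T)
    (h : a_bi * a_iw ≤ T)
    (b' w' : ℝ) (hb' : 0 < b') (hw' : 0 < w')
    (hprod : b' * w' = T) :
    let s := (-(a_bi + a_iw) +
      Real.sqrt ((a_bi + a_iw) ^ 2 - 4 * a_bi * a_iw + 4 * T)) / 2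
    s ≤ max |b' - a_bi| |w' - a_iw| ∧
    (max |b' - a_bi| |w' - a_iw| = s ↔ b' = a_bi + s ∧ w' = a_iw + s) :=
  stmt_19_general a_bi a_iw T h b' w' hb' hw' hprod
end
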